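/- arXiv:1405.0514 — 6 statements merged into one kernel-verified Lean document; each statement's English description precedes it below -/
import Mathlib

section
/- Let K be a DAG representation of a Σ-context and G a Σ-DAG. Then unfold(K[G]) = unfold(K)[unfold(G)], i.e., unfolding commutes with concatenation of a context-DAG and a tree-DAG. -/
/-- Labelled ordered trees (trees whose nodes carry labels and ordered lists of
children; for a ranked alphabet the rank condition is imposed as a hypothesis). -/
inductive LTree (L : Type) : Type
  | node : L → List (LTree L) → LTree L

/-- A rooted labelled ordered DAG; acyclicity is expressed by well-foundedness
of the child relation. -/
structure LDag (L : Type) where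
  V : Type
  root : V
  label : V → L
  succ : V → List V
  wf : WellFounded (fun u v => u ∈ succ v)

/-- Unfolding of (the sub-DAG rooted at) a node of a DAG into a tree. -/
noncomputable def LDag.unfoldFrom {L : Type} (D : LDag L) : D.V → LTree L :=
  D.wf.fix fun v ih => LTree.node (D.label v) ((D.succ v).attach.map fun u => ih u.1 u.2)

/-- The unfolding of a DAG. -/
noncomputable def LDag.unfold {L : Type} (D : LDag L) : LTree L :=
  D.unfoldFrom D.root

/-- Substituting a Σ-tree for the hole `□` (represented by the label `none`) in a
tree over `Σ ∪ {□}`; on trees with exactly one occurrence of `none` this is the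
concatenation `c[t]` of a context and a tree. -/
def substHole {Sg : Type} (g : LTree Sg) : LTree (Option Sg) → LTree Sg
  | .node none _ => g
  | .node (some σ) ts => .node σ (ts.attach.map fun t => substHole g t.1)
decreasing_by
  have := List.sizeOf_lt_of_mem t.2
  simp only [LTree.node.sizeOf_spec]
  omega

/-- The number of occurrences of the hole `□` (label `none`) in a tree over
`Σ ∪ {□}`; a tree represents a Σ-context iff this number is `1`. -/
def holeCount {Sg : Type} : LTree (Option Sg) → ℕ
  | .node a ts => (match a with | none => 1 | some _ => 0) + (ts.attach.map fun t => holeCount t.1).sum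
decreasing_by
  have := List.sizeOf_lt_of_mem t.2
  simp only [LTree.node.sizeOf_spec]
  omega

/-- The concatenation `K[G]` of a DAG `K` representing a Σ-context and a Σ-DAG
`G`: the root of `G` is substituted for the `□`-labelled node(s) of `K`, i.e.
every edge into a `□`-labelled node is redirected to the root of `G` (the
`□`-labelled nodes themselves become unreachable junk). -/
def LDag.concat {Sg : Type} [DecidableEq Sg] (K : LDag (Option Sg)) (G : LDag Sg) :
    LDag Sg where
  V := G.V ⊕ K.V
  root := if K.label K.root = none then .inl G.root else .inr K.root
  label := fun v =>
    match v with
    | .inl a => G.label a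
    | .inr b => (K.label b).getD (G.label G.root)
  succ := fun v =>
    match v with
    | .inl a => (G.succ a).map .inl
    | .inr b =>
      match K.label b with
      | none => []
      | some _ => (K.succ b).map fun u =>
          if K.label u = none then .inl G.root else .inr u
  wf := by
    apply Subrelation.wf
      (r := Sum.Lex (fun u v => u ∈ G.succ v) (fun u v => u ∈ K.succ v))
    · intro u v h
      match v with
      | .inl a =>
        simp only [List.mem_map] at h
        obtain ⟨u', hu', rfl⟩ := h
        exact Sum.Lex.inl hu'
      | .inr b =>
        cases hb : K.label b with
        | none => simp [hb] at h
        | some σ =>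
          simp only [hb, List.mem_map] at h
          obtain ⟨u', hu', rfl⟩ := h
          split
          · exact Sum.Lex.sep _ _
          · exact Sum.Lex.inr hu'
    · exact Sum.lex_wf G.wf K.wf

/-!
In `K[G]` every edge into a node `u` of `K` ends at `concatNode u`, which is the root of `G` when
`u` is a hole and `u` itself otherwise, while the `G`-part of `K[G]` is a copy of `G`. So
well-founded induction along `K` shows that unfolding `K[G]` from `concatNode u` gives the
unfolding of `K` from `u` with every hole replaced by `unfold G`; at `u = root K` this is the
theorem.
-/

theorem substHole_some {Sg : Type} (g : LTree Sg) (σ : Sg) (ts : List (LTree (Option Sg))) :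
    substHole g (.node (some σ) ts) = .node σ (ts.map (substHole g)) := by
  rw [substHole, List.attach_map_val]

namespace LDag

theorem unfoldFrom_eq {L : Type} (D : LDag L) (v : D.V) :
    D.unfoldFrom v = .node (D.label v) ((D.succ v).map D.unfoldFrom) := by
  rw [unfoldFrom, D.wf.fix_eq, List.attach_map_val]

section Concat

variable {Sg : Type} [DecidableEq Sg] (K : LDag (Option Sg)) (G : LDag Sg)

def concatNode (u : K.V) : (K.concat G).V :=
  if K.label u = none then .inl G.root else .inr u

theorem concatNode_of_none {u : K.V} (hu : K.label u = none) :
    K.concatNode G u = .inl G.root := if_pos hu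

theorem concatNode_of_some {u : K.V} {σ : Sg} (hu : K.label u = some σ) :
    K.concatNode G u = .inr u := if_neg (by simp [hu])

theorem concat_root : (K.concat G).root = K.concatNode G K.root := rfl

theorem concat_label_inl (a : G.V) : (K.concat G).label (.inl a) = G.label a := rfl

theorem concat_succ_inl (a : G.V) :
    (K.concat G).succ (.inl a) = (G.succ a).map .inl := rfl

theorem concat_label_inr {b : K.V} {σ : Sg} (hb : K.label b = some σ) :
    (K.concat G).label (.inr b) = σ := by
  simp [concat, hb]

theorem concat_succ_inr {b : K.V} {σ : Sg} (hb : K.label b = some σ) :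
    (K.concat G).succ (.inr b) = (K.succ b).map (K.concatNode G) := by
  simp only [concat, hb]
  rfl

theorem unfoldFrom_concat_inl (a : G.V) :
    (K.concat G).unfoldFrom (.inl a) = G.unfoldFrom a := by
  induction a using G.wf.induction with
  | _ a ih =>
    rw [(K.concat G).unfoldFrom_eq (.inl a), G.unfoldFrom_eq, concat_label_inl, concat_succ_inl]
    exact congrArg _ (List.map_map.trans (List.map_congr_left fun u hu => ih u hu))

theorem unfoldFrom_concatNode (b : K.V) :
    (K.concat G).unfoldFrom (K.concatNode G b) = substHole G.unfold (K.unfoldFrom b) := by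
  induction b using K.wf.induction with
  | _ b ih =>
    rw [K.unfoldFrom_eq b]
    cases hb : K.label b with
    | none => rw [concatNode_of_none K G hb, unfoldFrom_concat_inl, substHole, unfold]
    | some σ =>
      rw [concatNode_of_some K G hb, (K.concat G).unfoldFrom_eq (.inr b), concat_label_inr K G hb,
        concat_succ_inr K G hb, substHole_some, List.map_map, List.map_map]
      exact congrArg _ (List.map_congr_left fun u hu => ih u hu)

end Concat

end LDag

theorem unfold_concat_general {Sg : Type} [DecidableEq Sg]
    (K : LDag (Option Sg)) (G : LDag Sg) :
    (K.concat G).unfold = substHole G.unfold K.unfold := by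
  rw [LDag.unfold, LDag.concat_root]
  exact K.unfoldFrom_concatNode G K.root

/-- unfolding commutes with concatenation:
`unfold(K[G]) = unfold(K)[unfold(G)]`, for a DAG `K` representing a Σ-context
(its unfolding has exactly one hole) and a Σ-DAG `G` (with ranks respected). -/
theorem unfold_concat {Sg : Type} [DecidableEq Sg] (rk : Sg → ℕ)
    (K : LDag (Option Sg)) (G : LDag Sg)
    (hKrk : ∀ v, (K.succ v).length = (K.label v).elim 0 rk)
    (hGrk : ∀ v, (G.succ v).length = rk (G.label v))
    (hctx : holeCount K.unfold = 1) :
    (K.concat G).unfold = substHole G.unfold K.unfold :=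
  unfold_concat_general K G
end

section
/- Two multiplicity tree automata A and B over a field, with dimensions n₁ and n₂ and over the same ranked alphabet Σ, are equivalent (i.e., ‖A‖(t) = ‖B‖(t) for all Σ-trees t) if and only if ‖A‖(t) = ‖B‖(t) for all Σ-trees t of height strictly less than n₁ + n₂. -/
/-- Σ-trees over a ranked alphabet. -/
inductive RTree (Sig : Type) (rk : Sig → ℕ) : Type
  | node (σ : Sig) (ts : Fin (rk σ) → RTree Sig rk) : RTree Sig rk

/-- Extension of the tree representation `μ` to trees. -/
def mtaRun {Sig : Type} {rk : Sig → ℕ} {F : Type} [Field F] {S : Type} [Fintype S]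
    (μ : ∀ σ : Sig, Matrix (Fin (rk σ) → S) S F) : RTree Sig rk → S → F
  | .node σ ts => Matrix.vecMul (fun i => ∏ l, mtaRun μ (ts l) (i l)) (μ σ)

/-- The tree series recognised by an MTA: `‖A‖(t) = μ(t) · γ`. -/
def mtaWeight {Sig : Type} {rk : Sig → ℕ} {F : Type} [Field F] {S : Type} [Fintype S]
    (μ : ∀ σ : Sig, Matrix (Fin (rk σ) → S) S F) (γ : S → F) (t : RTree Sig rk) : F :=
  ∑ s, mtaRun μ t s * γ s

/-- The height of a Σ-tree: nullary symbols have height 0, and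
`height(σ(t₁,…,t_k)) = 1 + max_i height(t_i)`. -/
def height {Sig : Type} {rk : Sig → ℕ} : RTree Sig rk → ℕ
  | .node _ ts => Finset.univ.sup fun l => height (ts l) + 1

namespace MTAProof

variable {Sig : Type} {rk : Sig → ℕ} {F : Type} [Field F] {n₁ n₂ : ℕ}

/-- The combined state space. -/
abbrev W (F : Type) [Field F] (n₁ n₂ : ℕ) : Type := (Fin n₁ → F) × (Fin n₂ → F)

variable (μ₁ : ∀ σ : Sig, Matrix (Fin (rk σ) → Fin n₁) (Fin n₁) F)
variable (μ₂ : ∀ σ : Sig, Matrix (Fin (rk σ) → Fin n₂) (Fin n₂) F)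

/-- The multilinear transition map of the paired automaton. -/
def Phi (σ : Sig) (w : Fin (rk σ) → W F n₁ n₂) : W F n₁ n₂ :=
  (Matrix.vecMul (fun i => ∏ l, (w l).1 (i l)) (μ₁ σ),
   Matrix.vecMul (fun i => ∏ l, (w l).2 (i l)) (μ₂ σ))

/-- The paired run vector. -/
def pr (t : RTree Sig rk) : W F n₁ n₂ := (mtaRun μ₁ t, mtaRun μ₂ t)

lemma pr_node (σ : Sig) (ts : Fin (rk σ) → RTree Sig rk) :
    pr μ₁ μ₂ (.node σ ts) = Phi μ₁ μ₂ σ (fun l => pr μ₁ μ₂ (ts l)) := rfl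

lemma prod_update_apply {k : ℕ} {α : Type} (w : Fin k → α) (g : Fin k → α → F)
    (j : Fin k) (z : α) :
    (∏ l, g l (Function.update w j z l)) = g j z * ∏ l ∈ {j}ᶜ, g l (w l) := by
  rw [Fintype.prod_eq_mul_prod_compl j]
  rw [Function.update_self]
  congr 1
  refine Finset.prod_congr rfl (fun l hl => ?_)
  rw [Function.update_of_ne]
  simpa using hl

lemma Phi_update_add (σ : Sig) (w : Fin (rk σ) → W F n₁ n₂) (j : Fin (rk σ))
    (x y : W F n₁ n₂) :
    Phi μ₁ μ₂ σ (Function.update w j (x + y)) =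
      Phi μ₁ μ₂ σ (Function.update w j x) + Phi μ₁ μ₂ σ (Function.update w j y) := by
  unfold Phi
  refine Prod.ext (funext fun s => ?_) (funext fun s => ?_)
  · simp only [Matrix.vecMul, dotProduct, Prod.fst_add, Pi.add_apply]
    rw [← Finset.sum_add_distrib]
    refine Finset.sum_congr rfl fun i _ => ?_
    rw [prod_update_apply w (fun l a => a.1 (i l)), prod_update_apply w (fun l a => a.1 (i l)),
      prod_update_apply w (fun l a => a.1 (i l))]
    simp only [Prod.fst_add, Pi.add_apply]
    ring
  · simp only [Matrix.vecMul, dotProduct, Prod.snd_add, Pi.add_apply]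
    rw [← Finset.sum_add_distrib]
    refine Finset.sum_congr rfl fun i _ => ?_
    rw [prod_update_apply w (fun l a => a.2 (i l)), prod_update_apply w (fun l a => a.2 (i l)),
      prod_update_apply w (fun l a => a.2 (i l))]
    simp only [Prod.snd_add, Pi.add_apply]
    ring

lemma Phi_update_smul (σ : Sig) (w : Fin (rk σ) → W F n₁ n₂) (j : Fin (rk σ))
    (c : F) (x : W F n₁ n₂) :
    Phi μ₁ μ₂ σ (Function.update w j (c • x)) = c • Phi μ₁ μ₂ σ (Function.update w j x) := by
  unfold Phi
  refine Prod.ext (funext fun s => ?_) (funext fun s => ?_)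
  · simp only [Matrix.vecMul, dotProduct, Prod.smul_fst, Pi.smul_apply, smul_eq_mul]
    rw [Finset.mul_sum]
    refine Finset.sum_congr rfl fun i _ => ?_
    rw [prod_update_apply w (fun l a => a.1 (i l)), prod_update_apply w (fun l a => a.1 (i l))]
    simp only [Prod.smul_fst, Pi.smul_apply, smul_eq_mul]
    ring
  · simp only [Matrix.vecMul, dotProduct, Prod.smul_snd, Pi.smul_apply, smul_eq_mul]
    rw [Finset.mul_sum]
    refine Finset.sum_congr rfl fun i _ => ?_
    rw [prod_update_apply w (fun l a => a.2 (i l)), prod_update_apply w (fun l a => a.2 (i l))]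
    simp only [Prod.smul_snd, Pi.smul_apply, smul_eq_mul]
    ring

lemma Phi_update_zero (σ : Sig) (w : Fin (rk σ) → W F n₁ n₂) (j : Fin (rk σ)) :
    Phi μ₁ μ₂ σ (Function.update w j 0) = 0 := by
  have h := Phi_update_smul μ₁ μ₂ σ w j 0 0
  rw [zero_smul] at h
  rw [h, zero_smul]

/-- The key multilinearity lemma: if each argument lies in the span of `S`, and `T` contains
all values of `Phi σ` on arguments from `S`, then `T` contains the value on the arguments. -/
lemma Phi_mem (σ : Sig) (S : Set (W F n₁ n₂)) (T : Submodule F (W F n₁ n₂))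
    (hT : ∀ u : Fin (rk σ) → W F n₁ n₂, (∀ l, u l ∈ S) → Phi μ₁ μ₂ σ u ∈ T)
    (w : Fin (rk σ) → W F n₁ n₂) (hw : ∀ l, w l ∈ Submodule.span F S) :
    Phi μ₁ μ₂ σ w ∈ T := by
  suffices H : ∀ A : Finset (Fin (rk σ)), ∀ w : Fin (rk σ) → W F n₁ n₂,
      (∀ l, w l ∈ Submodule.span F S) → (∀ l ∉ A, w l ∈ S) → Phi μ₁ μ₂ σ w ∈ T by
    exact H Finset.univ w hw (fun l hl => absurd (Finset.mem_univ l) hl)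
  intro A
  induction A using Finset.induction_on with
  | empty => exact fun w _ hS => hT w (fun l => hS l (Finset.notMem_empty l))
  | @insert j A hj ih =>
    intro w hw hS
    have key : ∀ x ∈ Submodule.span F S, Phi μ₁ μ₂ σ (Function.update w j x) ∈ T := by
      intro x hx
      induction hx using Submodule.span_induction with
      | mem x hxS =>
        refine ih (Function.update w j x) (fun l => ?_) (fun l hl => ?_)
        · rcases eq_or_ne l j with rfl | hlj
          · rw [Function.update_self]; exact Submodule.subset_span hxS
          · rw [Function.update_of_ne hlj]; exact hw l
        · rcases eq_or_ne l j with rfl | hlj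
          · rw [Function.update_self]; exact hxS
          · rw [Function.update_of_ne hlj]
            exact hS l (by simp [Finset.mem_insert, hlj, hl])
      | zero => rw [Phi_update_zero]; exact T.zero_mem
      | add x y hx hy px py => rw [Phi_update_add]; exact T.add_mem px py
      | smul c x hx px => rw [Phi_update_smul]; exact T.smul_mem c px
    have := key (w j) (hw j)
    rwa [Function.update_eq_self] at this

/-- Run vectors of trees of height `< h`. -/
def SS (h : ℕ) : Set (W F n₁ n₂) :=
  {w | ∃ t : RTree Sig rk, height t < h ∧ pr μ₁ μ₂ t = w}

/-- The span of run vectors of trees of height `< h`. -/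
def V (h : ℕ) : Submodule F (W F n₁ n₂) := Submodule.span F (SS μ₁ μ₂ h)

lemma V_mono {h h' : ℕ} (hle : h ≤ h') : V μ₁ μ₂ h ≤ V (Sig := Sig) (rk := rk) μ₁ μ₂ h' :=
  Submodule.span_mono (fun w ⟨t, ht, hw⟩ => ⟨t, lt_of_lt_of_le ht hle, hw⟩)

lemma pr_mem_V (t : RTree Sig rk) : pr μ₁ μ₂ t ∈ V μ₁ μ₂ (height t + 1) :=
  Submodule.subset_span ⟨t, Nat.lt_succ_self _, rfl⟩

lemma height_child_lt (σ : Sig) (ts : Fin (rk σ) → RTree Sig rk) (l : Fin (rk σ)) :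
    height (ts l) < height (RTree.node σ ts) := by
  have : height (ts l) + 1 ≤ height (RTree.node σ ts) :=
    Finset.le_sup (f := fun l => height (ts l) + 1) (Finset.mem_univ l)
  omega

lemma V_step (h : ℕ) (hstab : V (Sig := Sig) (rk := rk) μ₁ μ₂ h = V μ₁ μ₂ (h + 1)) :
    V (Sig := Sig) (rk := rk) μ₁ μ₂ (h + 2) ≤ V μ₁ μ₂ (h + 1) := by
  refine Submodule.span_le.mpr ?_
  rintro w ⟨t, ht, rfl⟩
  obtain ⟨σ, ts⟩ := t
  rw [pr_node]
  refine Phi_mem μ₁ μ₂ σ (SS μ₁ μ₂ h) (V μ₁ μ₂ (h + 1)) ?_ _ ?_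
  · intro u hu
    choose t' ht' hpr using hu
    have heq : Phi μ₁ μ₂ σ u = pr μ₁ μ₂ (.node σ t') := by
      rw [pr_node]
      congr 1
      funext l
      rw [hpr l]
    rw [heq]
    refine Submodule.subset_span ⟨.node σ t', ?_, rfl⟩
    have : height (RTree.node σ t') ≤ h := by
      refine Finset.sup_le (fun l _ => ?_)
      exact ht' l
    omega
  · intro l
    have h1 : height (ts l) < h + 1 := by
      have := height_child_lt σ ts l
      omega
    have : pr μ₁ μ₂ (ts l) ∈ V μ₁ μ₂ (h + 1) :=
      V_mono μ₁ μ₂ h1 (pr_mem_V μ₁ μ₂ (ts l))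
    rw [← hstab] at this
    exact this

lemma V_stab (h : ℕ) (hs : V (Sig := Sig) (rk := rk) μ₁ μ₂ h = V μ₁ μ₂ (h + 1)) (k : ℕ) :
    V (Sig := Sig) (rk := rk) μ₁ μ₂ (h + k) = V μ₁ μ₂ h := by
  suffices H : ∀ k, V (Sig := Sig) (rk := rk) μ₁ μ₂ (h + k) = V μ₁ μ₂ h ∧
      V (Sig := Sig) (rk := rk) μ₁ μ₂ (h + k) = V μ₁ μ₂ (h + k + 1) from (H k).1
  intro k
  induction k with
  | zero => exact ⟨rfl, hs⟩
  | succ k ih =>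
    have step : V (Sig := Sig) (rk := rk) μ₁ μ₂ (h + k + 2) ≤ V μ₁ μ₂ (h + k + 1) :=
      V_step μ₁ μ₂ (h + k) ih.2
    have e : V (Sig := Sig) (rk := rk) μ₁ μ₂ (h + k + 1) = V μ₁ μ₂ (h + k + 2) :=
      le_antisymm (V_mono μ₁ μ₂ (by omega)) step
    exact ⟨ih.2.symm.trans ih.1, e⟩

lemma V_le_VN (h : ℕ) : V (Sig := Sig) (rk := rk) μ₁ μ₂ h ≤ V μ₁ μ₂ (n₁ + n₂) := by
  by_cases hex : ∃ h0 < n₁ + n₂, V (Sig := Sig) (rk := rk) μ₁ μ₂ h0 = V μ₁ μ₂ (h0 + 1)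
  · obtain ⟨h0, hh0, hs⟩ := hex
    rcases le_or_gt h h0 with hle | hlt
    · exact le_trans (V_mono μ₁ μ₂ hle) (V_mono μ₁ μ₂ (by omega))
    · have : V (Sig := Sig) (rk := rk) μ₁ μ₂ h = V μ₁ μ₂ h0 := by
        have := V_stab μ₁ μ₂ h0 hs (h - h0)
        rwa [show h0 + (h - h0) = h by omega] at this
      rw [this]
      exact V_mono μ₁ μ₂ (by omega)
  · push_neg at hex
    have hstrict : ∀ h0 < n₁ + n₂, V (Sig := Sig) (rk := rk) μ₁ μ₂ h0 < V μ₁ μ₂ (h0 + 1) :=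
      fun h0 hh0 => lt_of_le_of_ne (V_mono μ₁ μ₂ (by omega)) (hex h0 hh0)
    have hrank : ∀ h0 ≤ n₁ + n₂, h0 ≤ Module.finrank F (V (Sig := Sig) (rk := rk) μ₁ μ₂ h0) := by
      intro h0
      induction h0 with
      | zero => intro _; exact Nat.zero_le _
      | succ h0 ih =>
        intro hle
        have h1 := ih (by omega)
        have h2 := Submodule.finrank_lt_finrank_of_lt (hstrict h0 (by omega))
        omega
    have hN := hrank (n₁ + n₂) le_rfl
    have hWrank : Module.finrank F (W F n₁ n₂) = n₁ + n₂ := by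
      rw [Module.finrank_prod, Module.finrank_pi, Module.finrank_pi]
      simp
    have htop : V (Sig := Sig) (rk := rk) μ₁ μ₂ (n₁ + n₂) = ⊤ := by
      refine Submodule.eq_top_of_finrank_eq ?_
      have hle := Submodule.finrank_le (V (Sig := Sig) (rk := rk) μ₁ μ₂ (n₁ + n₂))
      omega
    rw [htop]
    exact le_top

lemma pr_mem_VN (t : RTree Sig rk) : pr μ₁ μ₂ t ∈ V μ₁ μ₂ (n₁ + n₂) :=
  V_le_VN μ₁ μ₂ (height t + 1) (pr_mem_V μ₁ μ₂ t)

end MTAProof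

/-- two MTAs of dimensions `n₁` and `n₂` over the same ranked
alphabet are equivalent iff they agree on all trees of height `< n₁ + n₂`. -/
theorem mta_equiv_iff_agree_below {Sig : Type} {rk : Sig → ℕ} {F : Type} [Field F]
    {n₁ n₂ : ℕ}
    (μ₁ : ∀ σ : Sig, Matrix (Fin (rk σ) → Fin n₁) (Fin n₁) F) (γ₁ : Fin n₁ → F)
    (μ₂ : ∀ σ : Sig, Matrix (Fin (rk σ) → Fin n₂) (Fin n₂) F) (γ₂ : Fin n₂ → F) :
    (∀ t : RTree Sig rk, mtaWeight μ₁ γ₁ t = mtaWeight μ₂ γ₂ t) ↔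
      (∀ t : RTree Sig rk, height t < n₁ + n₂ →
        mtaWeight μ₁ γ₁ t = mtaWeight μ₂ γ₂ t) := by
  constructor
  · exact fun H t _ => H t
  · intro H t
    have hmem := MTAProof.pr_mem_VN μ₁ μ₂ t
    have hkey : ∀ w ∈ MTAProof.V (Sig := Sig) (rk := rk) μ₁ μ₂ (n₁ + n₂),
        ∑ s, w.1 s * γ₁ s = ∑ s, w.2 s * γ₂ s := by
      intro w hw
      induction hw using Submodule.span_induction with
      | mem w hwS =>
        obtain ⟨t', ht', rfl⟩ := hwS
        exact H t' ht'
      | zero => simp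
      | add x y hx hy px py =>
        simp only [Prod.fst_add, Prod.snd_add, Pi.add_apply, add_mul,
          Finset.sum_add_distrib, px, py]
      | smul c x hx px =>
        simp only [Prod.smul_fst, Prod.smul_snd, Pi.smul_apply, smul_eq_mul, mul_assoc,
          ← Finset.mul_sum, px]
    exact hkey _ hmem
end

section
/- Let A and B be ℚ-multiplicity tree automata over Σ with total dimension n. Then A and B are equivalent if and only if Σ_{t ∈ T_Σ, height(t) < n} (‖A×A‖(t) + ‖B×B‖(t) − 2·‖A×B‖(t)) = 0. -/
/-- Transition matrices of the product automaton, `μ(σ) = P_k · (μ₁(σ) ⊗ μ₂(σ))`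
with the permutation `P_k` realised intrinsically on tuple row indices. -/
def prodμ {Sig : Type} {rk : Sig → ℕ} {F : Type} [Field F] {S₁ S₂ : Type}
    (μ₁ : ∀ σ : Sig, Matrix (Fin (rk σ) → S₁) S₁ F)
    (μ₂ : ∀ σ : Sig, Matrix (Fin (rk σ) → S₂) S₂ F) :
    ∀ σ : Sig, Matrix (Fin (rk σ) → S₁ × S₂) (S₁ × S₂) F :=
  fun σ => fun i s => μ₁ σ (fun l => (i l).1) s.1 * μ₂ σ (fun l => (i l).2) s.2

/-!
Both runs are evaluations of a single multilinear tree algebra on `V = F^S₁ × F^S₂`, and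
`‖A‖ - ‖B‖` is a linear functional on `V`. Let `W h` be the span of the vectors of trees of
height `< h`. By multilinearity `W (h + 1)` is determined by `W h`, so once this increasing chain
stalls it is constant; in a space of dimension `n` it stalls by step `n`, hence every tree vector
lies in `W n`, and agreement on trees of height `< n` gives agreement everywhere. Since the
product automaton multiplies weights, the summand is `(‖A‖(t) - ‖B‖(t))²`, and a finite sum of
rational squares vanishes iff every term does.
-/

theorem Monotone.le_of_succ_le_of_stable {α : Type*} [Preorder α] {W : ℕ → α} (hW : Monotone W)
    (hstable : ∀ h, W (h + 1) ≤ W h → W (h + 2) ≤ W (h + 1)) {h : ℕ} (hh : W (h + 1) ≤ W h)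
    (m : ℕ) : W m ≤ W h := by
  have hsucc : ∀ n ≥ h, W (n + 1) ≤ W n := fun n hn =>
    Nat.le_induction hh (fun n _ ih => hstable n ih) n hn
  rcases le_total m h with hm | hm
  · exact hW hm
  · exact antitoneOn_nat_Ici_of_succ_le hsucc (le_refl h) hm hm

namespace Submodule

variable {K V : Type*} [DivisionRing K] [AddCommGroup V] [Module K V] [FiniteDimensional K V]

theorem exists_le_finrank_succ_le {W : ℕ → Submodule K V} (hW : Monotone W) :
    ∃ h ≤ Module.finrank K V, W (h + 1) ≤ W h := by
  by_contra! hstrict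
  have hrank (h : ℕ) (hh : h ≤ Module.finrank K V + 1) : h ≤ Module.finrank K (W h) := by
    induction h with
    | zero => exact Nat.zero_le _
    | succ h ih =>
      have hlt : W h < W (h + 1) := lt_of_le_not_ge (hW h.le_succ) (hstrict h (by omega))
      exact (ih (by omega)).trans_lt (finrank_lt_finrank_of_lt hlt)
  exact Nat.not_succ_le_self _ ((hrank _ le_rfl).trans (finrank_le _))

theorem le_finrank_of_monotone_of_stable {W : ℕ → Submodule K V} (hW : Monotone W)
    (hstable : ∀ h, W (h + 1) ≤ W h → W (h + 2) ≤ W (h + 1)) (m : ℕ) :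
    W m ≤ W (Module.finrank K V) := by
  obtain ⟨h, hd, hh⟩ := exists_le_finrank_succ_le hW
  exact (hW.le_of_succ_le_of_stable hstable hh m).trans (hW hd)

end Submodule

theorem MultilinearMap.map_mem_span_image_pi {R ι N : Type*} {M : ι → Type*} [CommSemiring R]
    [∀ i, AddCommMonoid (M i)] [∀ i, Module R (M i)] [AddCommMonoid N] [Module R N] [Fintype ι]
    (f : MultilinearMap R M N) {s : ∀ i, Set (M i)} {x : ∀ i, M i}
    (hx : ∀ i, x i ∈ Submodule.span R (s i)) :
    f x ∈ Submodule.span R (f '' Set.univ.pi s) := by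
  classical
  choose c hc hcx using fun i => Submodule.mem_span_set.1 (hx i)
  have hx : x = fun i => ∑ m ∈ (c i).support, c i m • m := funext fun i => (hcx i).symm
  rw [hx, MultilinearMap.map_sum_finset]
  refine Submodule.sum_mem _ fun r hr => ?_
  rw [MultilinearMap.map_smul_univ]
  exact Submodule.smul_mem _ _ <| Submodule.subset_span
    ⟨_, fun i _ => hc i (Fintype.mem_piFinset.1 hr i), rfl⟩

namespace RTree

variable {Sig : Type} {rk : Sig → ℕ}

theorem height_node_lt_succ_iff {σ : Sig} {ts : Fin (rk σ) → RTree Sig rk} {h : ℕ} :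
    height (node σ ts) < h + 1 ↔ ∀ l, height (ts l) < h := by
  simp only [height, Nat.lt_succ_iff, Finset.sup_le_iff, Finset.mem_univ, true_implies,
    Nat.succ_le_iff]

theorem finite_setOf_height_lt [Finite Sig] :
    ∀ h : ℕ, {t : RTree Sig rk | height t < h}.Finite
  | 0 => by simp
  | h + 1 => by
    refine ((Set.finite_iUnion fun σ =>
      ((Set.Finite.pi fun _ => finite_setOf_height_lt h).image (node σ)))).subset ?_
    rintro ⟨σ, ts⟩ ht
    exact Set.mem_iUnion.2 ⟨σ, ts, fun l _ => height_node_lt_succ_iff.1 ht l, rfl⟩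

section eval

variable {R V W : Type*} [CommSemiring R] [AddCommMonoid V] [Module R V] [AddCommMonoid W]
  [Module R W]

def eval (f : ∀ σ : Sig, MultilinearMap R (fun _ : Fin (rk σ) => V) V) : RTree Sig rk → V
  | node σ ts => f σ fun l => eval f (ts l)

def evalSpan (f : ∀ σ : Sig, MultilinearMap R (fun _ : Fin (rk σ) => V) V) (h : ℕ) :
    Submodule R V :=
  Submodule.span R (eval f '' {t | height t < h})

variable (f : ∀ σ : Sig, MultilinearMap R (fun _ : Fin (rk σ) => V) V)

theorem evalSpan_mono : Monotone (evalSpan f) := fun _ _ hle =>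
  Submodule.span_mono <| Set.image_mono fun _ ht => lt_of_lt_of_le ht hle

theorem evalSpan_succ (h : ℕ) :
    evalSpan f (h + 1) =
      Submodule.span R (⋃ σ, f σ '' Set.univ.pi fun _ => (evalSpan f h : Set V)) := by
  apply le_antisymm
  · refine Submodule.span_le.2 ?_
    rintro _ ⟨⟨σ, ts⟩, ht, rfl⟩
    refine Submodule.subset_span <| Set.mem_iUnion.2 ⟨σ, _, fun l _ => ?_, rfl⟩
    exact Submodule.subset_span ⟨ts l, height_node_lt_succ_iff.1 ht l, rfl⟩
  · refine Submodule.span_le.2 <| Set.iUnion_subset fun σ => ?_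
    rintro _ ⟨x, hx, rfl⟩
    refine Submodule.span_le.2 ?_ <| (f σ).map_mem_span_image_pi fun l => hx l trivial
    rintro _ ⟨y, hy, rfl⟩
    choose ts hts hy using fun l => hy l trivial
    obtain rfl : (fun l => eval f (ts l)) = y := funext hy
    exact Submodule.subset_span ⟨node σ ts, height_node_lt_succ_iff.2 hts, rfl⟩

theorem evalSpan_succ_succ_le {h : ℕ} (hh : evalSpan f (h + 1) ≤ evalSpan f h) :
    evalSpan f (h + 2) ≤ evalSpan f (h + 1) := by
  calc evalSpan f (h + 2)
      _ = Submodule.span R (⋃ σ, f σ '' Set.univ.pi fun _ => (evalSpan f (h + 1) : Set V)) :=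
        evalSpan_succ f (h + 1)
      _ ≤ Submodule.span R (⋃ σ, f σ '' Set.univ.pi fun _ => (evalSpan f h : Set V)) :=
        Submodule.span_mono <| Set.iUnion_mono fun σ => Set.image_mono <| Set.pi_mono fun _ _ => hh
      _ = evalSpan f (h + 1) := (evalSpan_succ f h).symm

theorem eval_prod (g : ∀ σ : Sig, MultilinearMap R (fun _ : Fin (rk σ) => W) W)
    (t : RTree Sig rk) :
    eval (fun σ => ((f σ).compLinearMap fun _ => LinearMap.fst R V W).prod
      ((g σ).compLinearMap fun _ => LinearMap.snd R V W)) t = (eval f t, eval g t) := by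
  induction t with
  | node σ ts ih =>
    simp only [eval, ih]
    rfl

end eval

theorem eval_mem_evalSpan_finrank {K V : Type*} [Field K] [AddCommGroup V] [Module K V]
    [FiniteDimensional K V] (f : ∀ σ : Sig, MultilinearMap K (fun _ : Fin (rk σ) => V) V)
    (t : RTree Sig rk) : eval f t ∈ evalSpan f (Module.finrank K V) :=
  Submodule.le_finrank_of_monotone_of_stable (evalSpan_mono f)
    (fun _ => evalSpan_succ_succ_le f) (height t + 1)
    (Submodule.subset_span ⟨t, lt_add_one (height t), rfl⟩)

end RTree

section automata

variable {Sig : Type} {rk : Sig → ℕ} {F : Type} [Field F]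

def runMultilinear {S : Type} [Fintype S] (μ : ∀ σ : Sig, Matrix (Fin (rk σ) → S) S F)
    (σ : Sig) : MultilinearMap F (fun _ : Fin (rk σ) => S → F) (S → F) :=
  ∑ i : Fin (rk σ) → S,
    ((MultilinearMap.mkPiAlgebra F (Fin (rk σ)) F).compLinearMap
      fun l => LinearMap.proj (i l)).smulRight (μ σ i)

theorem mtaRun_eq_eval {S : Type} [Fintype S] (μ : ∀ σ : Sig, Matrix (Fin (rk σ) → S) S F) :
    mtaRun μ = RTree.eval (runMultilinear μ) := by
  funext t
  induction t with
  | node σ ts ih =>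
    simp only [mtaRun, RTree.eval, ← ih, Matrix.vecMul_eq_sum, runMultilinear,
      _root_.sum_apply, MultilinearMap.smulRight_apply,
      MultilinearMap.compLinearMap_apply, MultilinearMap.mkPiAlgebra_apply, LinearMap.proj_apply]

theorem mtaRun_prodμ {S₁ S₂ : Type} [Fintype S₁] [Fintype S₂]
    (μ₁ : ∀ σ : Sig, Matrix (Fin (rk σ) → S₁) S₁ F)
    (μ₂ : ∀ σ : Sig, Matrix (Fin (rk σ) → S₂) S₂ F)
    (t : RTree Sig rk) (s : S₁ × S₂) :
    mtaRun (prodμ μ₁ μ₂) t s = mtaRun μ₁ t s.1 * mtaRun μ₂ t s.2 := by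
  induction t generalizing s with
  | node σ ts ih =>
    simp only [mtaRun, Matrix.vecMul, dotProduct, prodμ]
    rw [Finset.sum_mul_sum, ← Equiv.sum_comp
      (Equiv.arrowProdEquivProdArrow (Fin (rk σ)) (fun _ => S₁) (fun _ => S₂)).symm,
      Fintype.sum_prod_type]
    refine Finset.sum_congr rfl fun i _ => Finset.sum_congr rfl fun j _ => ?_
    simp only [Equiv.arrowProdEquivProdArrow, Equiv.coe_fn_symm_mk, ih, Finset.prod_mul_distrib]
    ring

theorem mtaWeight_prodμ {S₁ S₂ : Type} [Fintype S₁] [Fintype S₂]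
    (μ₁ : ∀ σ : Sig, Matrix (Fin (rk σ) → S₁) S₁ F) (γ₁ : S₁ → F)
    (μ₂ : ∀ σ : Sig, Matrix (Fin (rk σ) → S₂) S₂ F) (γ₂ : S₂ → F)
    (t : RTree Sig rk) :
    mtaWeight (prodμ μ₁ μ₂) (fun s => γ₁ s.1 * γ₂ s.2) t =
      mtaWeight μ₁ γ₁ t * mtaWeight μ₂ γ₂ t := by
  simp only [mtaWeight, mtaRun_prodμ, Finset.sum_mul_sum, Fintype.sum_prod_type]
  exact Finset.sum_congr rfl fun s₁ _ => Finset.sum_congr rfl fun s₂ _ => by ring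

theorem mtaWeight_eq_of_forall_height_lt {S₁ S₂ : Type} [Fintype S₁] [Fintype S₂]
    (μ₁ : ∀ σ : Sig, Matrix (Fin (rk σ) → S₁) S₁ F) (γ₁ : S₁ → F)
    (μ₂ : ∀ σ : Sig, Matrix (Fin (rk σ) → S₂) S₂ F) (γ₂ : S₂ → F)
    (h : ∀ t : RTree Sig rk, height t < Fintype.card S₁ + Fintype.card S₂ →
      mtaWeight μ₁ γ₁ t = mtaWeight μ₂ γ₂ t)
    (t : RTree Sig rk) : mtaWeight μ₁ γ₁ t = mtaWeight μ₂ γ₂ t := by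
  let f := fun σ => ((runMultilinear μ₁ σ).compLinearMap fun _ => LinearMap.fst F _ _).prod
      ((runMultilinear μ₂ σ).compLinearMap fun _ => LinearMap.snd F _ _)
  let φ : (S₁ → F) × (S₂ → F) →ₗ[F] F :=
    Fintype.linearCombination F γ₁ ∘ₗ LinearMap.fst F _ _ -
      Fintype.linearCombination F γ₂ ∘ₗ LinearMap.snd F _ _
  have hφ (u : RTree Sig rk) : φ (RTree.eval f u) = mtaWeight μ₁ γ₁ u - mtaWeight μ₂ γ₂ u := by
    simp [φ, f, RTree.eval_prod, ← mtaRun_eq_eval, Fintype.linearCombination_apply, mtaWeight]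
  have hker : RTree.evalSpan f (Fintype.card S₁ + Fintype.card S₂) ≤ LinearMap.ker φ := by
    refine Submodule.span_le.2 ?_
    rintro _ ⟨u, hu, rfl⟩
    simp [hφ, h u hu]
  have hdim : Module.finrank F ((S₁ → F) × (S₂ → F)) = Fintype.card S₁ + Fintype.card S₂ := by
    simp
  have := hker (hdim ▸ RTree.eval_mem_evalSpan_finrank f t)
  rwa [LinearMap.mem_ker, hφ, sub_eq_zero] at this

end automata

/-- ℚ-MTAs `A`, `B` of total dimension `n = n₁ + n₂` are
equivalent iff `Σ_{height(t) < n} (‖A×A‖(t) + ‖B×B‖(t) − 2‖A×B‖(t)) = 0`. -/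
theorem mta_equiv_iff_sum_eq_zero {Sig : Type} [Fintype Sig] {rk : Sig → ℕ}
    {n₁ n₂ : ℕ}
    (μ₁ : ∀ σ : Sig, Matrix (Fin (rk σ) → Fin n₁) (Fin n₁) ℚ) (γ₁ : Fin n₁ → ℚ)
    (μ₂ : ∀ σ : Sig, Matrix (Fin (rk σ) → Fin n₂) (Fin n₂) ℚ) (γ₂ : Fin n₂ → ℚ) :
    (∀ t : RTree Sig rk, mtaWeight μ₁ γ₁ t = mtaWeight μ₂ γ₂ t) ↔
      (∑ᶠ t ∈ {t : RTree Sig rk | height t < n₁ + n₂},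
        (mtaWeight (prodμ μ₁ μ₁) (fun s => γ₁ s.1 * γ₁ s.2) t +
         mtaWeight (prodμ μ₂ μ₂) (fun s => γ₂ s.1 * γ₂ s.2) t -
         2 * mtaWeight (prodμ μ₁ μ₂) (fun s => γ₁ s.1 * γ₂ s.2) t)) = 0 := by
  have hsquare (t : RTree Sig rk) :
      mtaWeight (prodμ μ₁ μ₁) (fun s => γ₁ s.1 * γ₁ s.2) t +
        mtaWeight (prodμ μ₂ μ₂) (fun s => γ₂ s.1 * γ₂ s.2) t -
        2 * mtaWeight (prodμ μ₁ μ₂) (fun s => γ₁ s.1 * γ₂ s.2) t =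
      (mtaWeight μ₁ γ₁ t - mtaWeight μ₂ γ₂ t) * (mtaWeight μ₁ γ₁ t - mtaWeight μ₂ γ₂ t) := by
    simp only [mtaWeight_prodμ]
    ring
  simp only [hsquare]
  rw [finsum_mem_eq_finite_toFinset_sum _ (RTree.finite_setOf_height_lt _),
    Finset.sum_mul_self_eq_zero_iff]
  simp only [Set.Finite.mem_toFinset, Set.mem_ofPred_eq, sub_eq_zero]
  refine ⟨fun h t _ => h t, fun h => mtaWeight_eq_of_forall_height_lt μ₁ γ₁ μ₂ γ₂ ?_⟩
  simpa only [Fintype.card_fin] using h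
end

section
/- In the lower-bound construction: for a k-ary symbol σ ∉ {σ₀, σ₁} with μ(σ) = [1 1] ⊗ ([I_n; −I_n]^{⊗k} · B(σ)), and for j, i₁,...,i_k ∈ {0,...,n−1}, it holds that ‖A‖(σ₁^j(σ(σ₁^{i₁}(σ₀),...,σ₁^{i_k}(σ₀)))) = B(σ)_{(1+i₁,...,1+i_k), (1+n−j) mod n}, where indices (1+i₁,...,1+i_k) encode a row of B(σ) ∈ F^{n^k×n} in the standard Kronecker indexing. -/
/-- The ranked alphabet of the lower-bound construction: nullary `σ₀`
(`Sum.inl false`), unary `σ₁` (`Sum.inl true`), and further symbols from `Sg`. -/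
def rkA {Sg : Type} (rks : Sg → ℕ) : Bool ⊕ Sg → ℕ
  | .inl false => 0
  | .inl true => 1
  | .inr σ => rks σ

/-- The tree `σ₀`. -/
def leaf0 {Sg : Type} (rks : Sg → ℕ) : RTree (Bool ⊕ Sg) (rkA rks) :=
  .node (.inl false) Fin.elim0

/-- The tree constructor `σ₁(·)`. -/
def s1 {Sg : Type} {rks : Sg → ℕ} (t : RTree (Bool ⊕ Sg) (rkA rks)) :
    RTree (Bool ⊕ Sg) (rkA rks) :=
  .node (.inl true) (fun _ => t)

/-!
On the states `Fin 2 × Fin n`, the symbol `σ₁` cyclically shifts the second coordinate by one,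
so the run of `σ₁^i(σ₀)` is the unit vector at `(0, i)`. When every child of a node has a unit
vector as its run, the run of the node is the corresponding row of its matrix; for `μ(σ)` the
row `((0, i₁), …, (0, i_k))` is row `(i₁, …, i_k)` of `B(σ)`, since the sign block `0`
contributes `+1`.
The outer `σ₁^j` then shifts the column by `-j`, and `γ` reads off the state `(0, 0)`.
-/

theorem Fintype.prod_pi_single_one_apply {M₀ : Type*} [CommMonoidWithZero M₀] {ι S : Type*}
    [Fintype ι] [DecidableEq ι] [DecidableEq S] (p i : ι → S) :
    ∏ l, (Pi.single (p l) 1 : S → M₀) (i l) = (Pi.single p 1 : (ι → S) → M₀) i := by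
  simp [Pi.single_apply, Fintype.prod_boole, funext_iff]

theorem mtaRun_node_of_forall_eq_single {Sig : Type} {rk : Sig → ℕ} {F : Type} [Field F]
    {S : Type} [Fintype S] [DecidableEq S] (μ : ∀ σ : Sig, Matrix (Fin (rk σ) → S) S F)
    (σ : Sig) (ts : Fin (rk σ) → RTree Sig rk) (p : Fin (rk σ) → S)
    (h : ∀ l, mtaRun μ (ts l) = Pi.single (p l) 1) :
    mtaRun μ (.node σ ts) = μ σ p := by
  simp only [mtaRun, h, Fintype.prod_pi_single_one_apply]
  exact Matrix.single_one_vecMul p (μ σ)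

/-- `I₂ ⊗ P`, with `P` the cyclic permutation matrix sending `e_i` to `e_{i+1}`. -/
def cyclicShiftMatrix (F : Type) [Field F] (n : ℕ) [NeZero n] :
    Matrix (Fin 1 → Fin 2 × Fin n) (Fin 2 × Fin n) F :=
  fun i s => if s.1 = (i 0).1 ∧ s.2 = (i 0).2 + 1 then 1 else 0

/-- `[1 1] ⊗ ([I_n; −I_n]^{⊗k} · B)`. -/
def signedLiftMatrix {F : Type} [Field F] {n k : ℕ} (B : Matrix (Fin k → Fin n) (Fin n) F) :
    Matrix (Fin k → Fin 2 × Fin n) (Fin 2 × Fin n) F :=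
  fun i s =>
    ∑ jv, (∏ l, if (i l).2 = jv l then (if (i l).1 = 0 then 1 else -1) else 0) * B jv s.2

theorem signedLiftMatrix_apply_zero_row {F : Type} [Field F] {n k : ℕ}
    (B : Matrix (Fin k → Fin n) (Fin n) F) (iv : Fin k → Fin n) (s : Fin 2 × Fin n) :
    signedLiftMatrix B (fun l => (0, iv l)) s = B iv s.2 := by
  simp [signedLiftMatrix, Fintype.prod_boole, ← funext_iff]

section LowerBound

open Fin.NatCast

variable {Sg : Type} {rks : Sg → ℕ} {F : Type} [Field F] {n : ℕ} [NeZero n]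
  {μ : ∀ a : Bool ⊕ Sg, Matrix (Fin (rkA rks a) → Fin 2 × Fin n) (Fin 2 × Fin n) F}

theorem mtaRun_leaf0
    (hμ0 : μ (.inl false) = fun _ s => if s.1 = 0 ∧ s.2 = 0 then 1 else 0) :
    mtaRun μ (leaf0 rks) = Pi.single (0, 0) 1 := by
  have hnode := mtaRun_node_of_forall_eq_single μ (.inl false) (fun l => l.elim0)
    (fun l => l.elim0) (fun l => l.elim0)
  rw [hμ0] at hnode
  exact hnode.trans (by ext s; simp [Pi.single_apply, Prod.ext_iff])

theorem mtaRun_s1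
    (hμ1 : μ (.inl true) = cyclicShiftMatrix F n)
    (t : RTree (Bool ⊕ Sg) (rkA rks)) (s : Fin 2 × Fin n) :
    mtaRun μ (s1 t) s = mtaRun μ t (s.1, s.2 - 1) := by
  have hrow : ∀ i : Fin (rkA rks (.inl true)) → Fin 2 × Fin n,
      (s.1 = (i (0 : Fin 1)).1 ∧ s.2 = (i (0 : Fin 1)).2 + 1) ↔
        i = fun _ => (s.1, s.2 - 1) := by
    intro i
    refine Iff.trans ?_ funext_iff.symm
    change _ ↔ ∀ l : Fin 1, i l = _
    rw [Fin.forall_fin_one, Prod.ext_iff, eq_sub_iff_add_eq]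
    exact and_congr eq_comm eq_comm
  simp only [s1, mtaRun, Matrix.vecMul, dotProduct, hμ1, cyclicShiftMatrix, hrow, mul_ite,
    mul_one, mul_zero, Finset.sum_ite_eq', Finset.mem_univ, if_true, Finset.prod_const,
    Finset.card_univ, Fintype.card_fin]
  exact pow_one _

theorem mtaRun_s1_iterate
    (hμ1 : μ (.inl true) = cyclicShiftMatrix F n)
    (m : ℕ) (t : RTree (Bool ⊕ Sg) (rkA rks)) (s : Fin 2 × Fin n) :
    mtaRun μ (s1^[m] t) s = mtaRun μ t (s.1, s.2 - m) := by
  induction m generalizing s with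
  | zero => simp
  | succ m ih =>
    rw [Function.iterate_succ_apply', mtaRun_s1 hμ1, ih, Nat.cast_succ, sub_sub, add_comm]

theorem mtaRun_s1_iterate_leaf0
    (hμ0 : μ (.inl false) = fun _ s => if s.1 = 0 ∧ s.2 = 0 then 1 else 0)
    (hμ1 : μ (.inl true) = cyclicShiftMatrix F n)
    (i : Fin n) :
    mtaRun μ (s1^[(i : ℕ)] (leaf0 rks)) = Pi.single (0, i) 1 := by
  ext s
  rw [mtaRun_s1_iterate hμ1, mtaRun_leaf0 hμ0, Fin.cast_val_eq_self]
  simp only [Pi.single_apply, Prod.ext_iff, sub_eq_zero]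

theorem mtaRun_node_inr_s1_iterate_leaf0
    (hμ0 : μ (.inl false) = fun _ s => if s.1 = 0 ∧ s.2 = 0 then 1 else 0)
    (hμ1 : μ (.inl true) = cyclicShiftMatrix F n)
    {σ : Sg} {B : Matrix (Fin (rks σ) → Fin n) (Fin n) F}
    (hμσ : μ (.inr σ) = signedLiftMatrix B)
    (iv : Fin (rks σ) → Fin n) (s : Fin 2 × Fin n) :
    mtaRun μ (.node (.inr σ) fun l => s1^[(iv l : ℕ)] (leaf0 rks)) s = B iv s.2 := by
  rw [mtaRun_node_of_forall_eq_single μ (.inr σ) _ (fun l => (0, iv l))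
    (fun l => mtaRun_s1_iterate_leaf0 hμ0 hμ1 (iv l)), hμσ]
  exact signedLiftMatrix_apply_zero_row B iv s

end LowerBound

/-- in the lower-bound construction with `2n` states
(`S = Fin 2 × Fin n`), where `μ(σ₀) = [1 0] ⊗ e₁`, `μ(σ₁) = I₂ ⊗ P` and, for
each `k`-ary `σ ∉ {σ₀,σ₁}`, `μ(σ) = [1 1] ⊗ ([I_n; −I_n]^{⊗k} · B(σ))`, and
`γ = [1 0]ᵀ ⊗ e₁ᵀ`, the recognised series satisfies
`‖A‖(σ₁^j(σ(σ₁^{i₁}(σ₀),…,σ₁^{i_k}(σ₀)))) = B(σ)_{(i₁,…,i_k), −j}`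
(with 0-based indices; `−j = (n−j) mod n` is the column `(1+n−j) mod n` of the
paper's 1-based indexing). -/
theorem lower_bound_weight_general {Sg : Type} (rks : Sg → ℕ) {F : Type}
    [Field F] (n : ℕ) [NeZero n]
    (μ : ∀ a : Bool ⊕ Sg, Matrix (Fin (rkA rks a) → Fin 2 × Fin n) (Fin 2 × Fin n) F)
    (B : ∀ σ : Sg, Matrix (Fin (rks σ) → Fin n) (Fin n) F)
    (hμ0 : μ (.inl false) =
      fun _ s => if s.1 = 0 ∧ s.2 = 0 then 1 else 0)
    (hμ1 : μ (.inl true) =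
      fun i s => if s.1 = (i ((0 : Fin 1))).1 ∧ s.2 = (i ((0 : Fin 1))).2 + 1 then 1 else 0)
    (hμ2 : ∀ σ : Sg, μ (.inr σ) =
      fun i s =>
        ∑ jv : Fin (rks σ) → Fin n,
          (∏ l, if (i l).2 = jv l then (if (i l).1 = 0 then (1 : F) else -1) else 0) *
            B σ jv s.2) :
    ∀ (σ : Sg) (j : Fin n) (iv : Fin (rks σ) → Fin n),
      (∑ s, mtaRun μ
          (s1^[(j : ℕ)]
            (RTree.node (.inr σ) (fun l => s1^[((iv l : ℕ))] (leaf0 rks)))) s *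
          (if s.1 = 0 ∧ s.2 = 0 then (1 : F) else 0)) =
        B σ iv (-j) := by
  intro σ j iv
  have hrun : ∀ s : Fin 2 × Fin n, mtaRun μ (s1^[(j : ℕ)]
      (.node (.inr σ) fun l => s1^[(iv l : ℕ)] (leaf0 rks))) s = B σ iv (s.2 - j) := fun s => by
    rw [mtaRun_s1_iterate hμ1, mtaRun_node_inr_s1_iterate_leaf0 hμ0 hμ1 (hμ2 σ),
      Fin.cast_val_eq_self]
  simp [hrun, Fintype.sum_prod_type]
end

section
/- In the lower-bound construction: if a Σ-tree t contains at least two (nodes labelled with) symbols not in {σ₀, σ₁}, then ‖A‖(t) = 0. More precisely, for the automaton A = (2n, Σ, μ, γ) of the construction, if Σ_{σ ∈ Σ∖{σ₀,σ₁}} #_σ(t) ≥ 2 then μ(t) = 0 and hence ‖A‖(t) = 0. -/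
/-- `Σ_{σ ∈ Σ∖{σ₀,σ₁}} #_σ(t)`: the number of nodes of `t` labelled by symbols
other than `σ₀`, `σ₁`. -/
def countOther {Sg : Type} {rks : Sg → ℕ} : RTree (Bool ⊕ Sg) (rkA rks) → ℕ
  | .node a ts =>
      (match a with | .inr _ => 1 | .inl _ => 0) + ∑ l, countOther (ts l)

section Matrices

variable {F : Type} [Field F] {n : ℕ}

/-- The matrix `I₂ ⊗ P` of `σ₁`, with `P` the cyclic shift of `Fin n`. -/
def shiftMatrix [NeZero n] : Matrix (Fin 1 → Fin 2 × Fin n) (Fin 2 × Fin n) F :=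
  fun i s => if s.1 = (i 0).1 ∧ s.2 = (i 0).2 + 1 then 1 else 0

/-- The matrix `[1 1] ⊗ ([I_n; −I_n]^{⊗k} · B)`. -/
def signedLift {k : ℕ} (B : Matrix (Fin k → Fin n) (Fin n) F) :
    Matrix (Fin k → Fin 2 × Fin n) (Fin 2 × Fin n) F :=
  fun i s => ∑ jv : Fin k → Fin n,
    (∏ l, if (i l).2 = jv l then (if (i l).1 = 0 then (1 : F) else -1) else 0) * B jv s.2

/-- A vector of the form `[1 1] ⊗ α`. -/
def IsBalanced (v : Fin 2 × Fin n → F) : Prop :=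
  ∀ x, v (1, x) = v (0, x)

lemma vecMul_shiftMatrix [NeZero n] (v : Fin 1 → Fin 2 × Fin n → F) (s : Fin 2 × Fin n) :
    Matrix.vecMul (fun i => ∏ l, v l (i l)) shiftMatrix s = v 0 (s.1, s.2 - 1) := by
  rw [Matrix.vecMul, dotProduct, ← (Equiv.funUnique (Fin 1) _).symm.sum_comp,
    Fintype.sum_eq_single (s.1, s.2 - 1)]
  · simp [shiftMatrix]
  · rintro p hp
    have hs : ¬ (s.1 = p.1 ∧ s.2 = p.2 + 1) := by
      rintro ⟨h1, h2⟩
      exact hp (Prod.ext h1.symm (by rw [h2, add_sub_cancel_right]))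
    simp [shiftMatrix, hs]

lemma sum_prod_mul_prod_signed {k : ℕ} (v : Fin k → Fin 2 × Fin n → F) (j : Fin k → Fin n) :
    ∑ i : Fin k → Fin 2 × Fin n, (∏ l, v l (i l)) *
        ∏ l, (if (i l).2 = j l then (if (i l).1 = 0 then (1 : F) else -1) else 0) =
      ∏ l, (v l (0, j l) - v l (1, j l)) := by
  have hfactor : ∀ l, v l (0, j l) - v l (1, j l) =
      ∑ p : Fin 2 × Fin n,
        v l p * (if p.2 = j l then (if p.1 = 0 then (1 : F) else -1) else 0) := by
    intro l
    simp [Fintype.sum_prod_type, Fin.sum_univ_two, mul_ite, sub_eq_add_neg]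
  simp only [hfactor, Fintype.prod_sum, Finset.prod_mul_distrib]

lemma vecMul_signedLift {k : ℕ} (B : Matrix (Fin k → Fin n) (Fin n) F)
    (v : Fin k → Fin 2 × Fin n → F) (s : Fin 2 × Fin n) :
    Matrix.vecMul (fun i => ∏ l, v l (i l)) (signedLift B) s =
      ∑ jv, (∏ l, (v l (0, jv l) - v l (1, jv l))) * B jv s.2 := by
  simp only [Matrix.vecMul, dotProduct, signedLift, Finset.mul_sum, ← mul_assoc]
  rw [Finset.sum_comm]
  simp only [← Finset.sum_mul, sum_prod_mul_prod_signed]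

lemma isBalanced_vecMul_signedLift {k : ℕ} (B : Matrix (Fin k → Fin n) (Fin n) F)
    (v : Fin k → Fin 2 × Fin n → F) :
    IsBalanced (Matrix.vecMul (fun i => ∏ l, v l (i l)) (signedLift B)) := by
  intro x
  simp only [vecMul_signedLift]

lemma vecMul_signedLift_eq_zero {k : ℕ} (B : Matrix (Fin k → Fin n) (Fin n) F)
    (v : Fin k → Fin 2 × Fin n → F) (l : Fin k) (hl : IsBalanced (v l)) :
    Matrix.vecMul (fun i => ∏ l, v l (i l)) (signedLift B) = 0 := by
  funext s
  rw [vecMul_signedLift]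
  refine Finset.sum_eq_zero fun jv _ => ?_
  rw [Finset.prod_eq_zero (Finset.mem_univ l) (by rw [hl, sub_self]), zero_mul]

end Matrices

section Trees

variable {Sg : Type} {rks : Sg → ℕ} {F : Type} [Field F] {n : ℕ}
  {μ : ∀ a : Bool ⊕ Sg, Matrix (Fin (rkA rks a) → Fin 2 × Fin n) (Fin 2 × Fin n) F}

lemma countOther_inl_false (ts : Fin (rkA rks (.inl false)) → RTree (Bool ⊕ Sg) (rkA rks)) :
    countOther (.node (.inl false) ts) = 0 :=
  show 0 + ∑ l : Fin 0, countOther (ts l) = 0 by simp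

lemma countOther_inl_true (ts : Fin (rkA rks (.inl true)) → RTree (Bool ⊕ Sg) (rkA rks)) :
    countOther (.node (.inl true) ts) = countOther (ts (0 : Fin 1)) :=
  show 0 + ∑ l : Fin 1, countOther (ts l) = _ by simp

lemma mtaRun_inl_true [NeZero n] (hμ1 : μ (.inl true) = shiftMatrix)
    (ts : Fin (rkA rks (.inl true)) → RTree (Bool ⊕ Sg) (rkA rks)) (s : Fin 2 × Fin n) :
    mtaRun μ (.node (.inl true) ts) s = mtaRun μ (ts (0 : Fin 1)) (s.1, s.2 - 1) := by
  rw [mtaRun, hμ1]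
  exact vecMul_shiftMatrix (fun l => mtaRun μ (ts l)) s

lemma mtaRun_inr_eq {B : ∀ σ : Sg, Matrix (Fin (rks σ) → Fin n) (Fin n) F}
    (hμ2 : ∀ σ, μ (.inr σ) = signedLift (B σ)) (σ : Sg)
    (ts : Fin (rkA rks (.inr σ)) → RTree (Bool ⊕ Sg) (rkA rks)) :
    mtaRun μ (.node (.inr σ) ts) =
      Matrix.vecMul (fun i => ∏ l, mtaRun μ (ts l) (i l)) (signedLift (B σ)) := by
  rw [mtaRun, hμ2]
  rfl

lemma isBalanced_and_eq_zero_of_countOther [NeZero n]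
    {B : ∀ σ : Sg, Matrix (Fin (rks σ) → Fin n) (Fin n) F}
    (hμ1 : μ (.inl true) = shiftMatrix) (hμ2 : ∀ σ, μ (.inr σ) = signedLift (B σ))
    (t : RTree (Bool ⊕ Sg) (rkA rks)) :
    (1 ≤ countOther t → IsBalanced (mtaRun μ t)) ∧ (2 ≤ countOther t → mtaRun μ t = 0) := by
  induction t with
  | node a ts ih =>
    match a with
    | .inl false =>
      rw [countOther_inl_false]
      omega
    | .inl true =>
      rw [countOther_inl_true]
      refine ⟨fun h x => ?_, fun h => funext fun s => ?_⟩
      · rw [mtaRun_inl_true hμ1, mtaRun_inl_true hμ1]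
        exact (ih _).1 h _
      · rw [mtaRun_inl_true hμ1, (ih _).2 h]
        rfl
    | .inr σ =>
      rw [mtaRun_inr_eq hμ2]
      refine ⟨fun _ => isBalanced_vecMul_signedLift _ _, fun h => ?_⟩
      obtain ⟨l, -, hl⟩ : ∃ l ∈ Finset.univ, countOther (ts l) ≠ 0 :=
        Finset.exists_ne_zero_of_sum_ne_zero (by simp only [countOther] at h; omega)
      exact vecMul_signedLift_eq_zero _ _ l ((ih l).1 (Nat.one_le_iff_ne_zero.mpr hl))

end Trees

theorem lower_bound_weight_zero_general {Sg : Type} (rks : Sg → ℕ) {F : Type}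
    [Field F] (n : ℕ) [NeZero n]
    (μ : ∀ a : Bool ⊕ Sg, Matrix (Fin (rkA rks a) → Fin 2 × Fin n) (Fin 2 × Fin n) F)
    (B : ∀ σ : Sg, Matrix (Fin (rks σ) → Fin n) (Fin n) F)
    (hμ1 : μ (.inl true) =
      fun i s => if s.1 = (i ((0 : Fin 1))).1 ∧ s.2 = (i ((0 : Fin 1))).2 + 1 then 1 else 0)
    (hμ2 : ∀ σ : Sg, μ (.inr σ) =
      fun i s =>
        ∑ jv : Fin (rks σ) → Fin n,
          (∏ l, if (i l).2 = jv l then (if (i l).1 = 0 then (1 : F) else -1) else 0) *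
            B σ jv s.2)
    (t : RTree (Bool ⊕ Sg) (rkA rks)) (ht : 2 ≤ countOther t) :
    mtaRun μ t = 0 ∧
      (∑ s, mtaRun μ t s * (if s.1 = 0 ∧ s.2 = 0 then (1 : F) else 0)) = 0 := by
  have hrun : mtaRun μ t = 0 := (isBalanced_and_eq_zero_of_countOther hμ1 hμ2 t).2 ht
  exact ⟨hrun, by simp [hrun]⟩

/-- in the lower-bound construction, if a tree `t` contains at
least two nodes labelled by symbols outside `{σ₀, σ₁}`, then `μ(t) = 0` and
hence `‖A‖(t) = 0`. -/
theorem lower_bound_weight_zero {Sg : Type} (rks : Sg → ℕ) {F : Type}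
    [Field F] (n : ℕ) [NeZero n]
    (μ : ∀ a : Bool ⊕ Sg, Matrix (Fin (rkA rks a) → Fin 2 × Fin n) (Fin 2 × Fin n) F)
    (B : ∀ σ : Sg, Matrix (Fin (rks σ) → Fin n) (Fin n) F)
    (hμ0 : μ (.inl false) =
      fun _ s => if s.1 = 0 ∧ s.2 = 0 then 1 else 0)
    (hμ1 : μ (.inl true) =
      fun i s => if s.1 = (i ((0 : Fin 1))).1 ∧ s.2 = (i ((0 : Fin 1))).2 + 1 then 1 else 0)
    (hμ2 : ∀ σ : Sg, μ (.inr σ) =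
      fun i s =>
        ∑ jv : Fin (rks σ) → Fin n,
          (∏ l, if (i l).2 = jv l then (if (i l).1 = 0 then (1 : F) else -1) else 0) *
            B σ jv s.2)
    (t : RTree (Bool ⊕ Sg) (rkA rks)) (ht : 2 ≤ countOther t) :
    mtaRun μ t = 0 ∧
      (∑ s, mtaRun μ t s * (if s.1 = 0 ∧ s.2 = 0 then (1 : F) else 0)) = 0 :=
  lower_bound_weight_zero_general rks n μ B hμ1 hμ2 t ht
end

section
/- Let f be a tree series and H its Hankel matrix. Suppose the rows H_{t₁,Y},...,H_{t_n,Y} are linearly independent, the hypothesis transition matrices satisfy μ(σ)·H_{X,Y} = H_{σ(X,...,X),Y}, and for trees τ₁,...,τ_k we have H_{τ_j,Y} = μ(τ_j)·H_{X,Y} for all j ∈ [k]. Further suppose that Y contains the contexts c[σ(t_{i₁},...,t_{i_{j−1}},□,τ_{j+1},...,τ_k)] for all j ∈ [k] and (i₁,...,i_{j−1}) ∈ [n]^{j−1}, for some context c ∈ Y. Then H_{σ(τ₁,...,τ_k),c} = μ(σ(τ₁,...,τ_k))·H_{X,c}; i.e., the hypothesis computes the correct value of f(c[σ(τ₁,...,τ_k)]).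 -/
/-- Σ-contexts: `node σ pos sub c` is the context whose `pos`-th child is the
context `c` and whose other children are the trees `sub l`. -/
inductive Ctxt (Sig : Type) (rk : Sig → ℕ) : Type
  | hole : Ctxt Sig rk
  | node (σ : Sig) (pos : Fin (rk σ)) (sub : Fin (rk σ) → RTree Sig rk)
      (c : Ctxt Sig rk) : Ctxt Sig rk

/-- Concatenation `c[t]` of a context and a tree. -/
def plug {Sig : Type} {rk : Sig → ℕ} : Ctxt Sig rk → RTree Sig rk → RTree Sig rk
  | .hole, t => t
  | .node σ p sub c, t => .node σ (Function.update sub p (plug c t))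

/-- Composition `c[d]` of contexts: substitute the context `d` for `□` in `c`. -/
def ctxComp {Sig : Type} {rk : Sig → ℕ} : Ctxt Sig rk → Ctxt Sig rk → Ctxt Sig rk
  | .hole, d => d
  | .node σ p sub c, d => .node σ p sub (ctxComp c d)

lemma plug_ctxComp {Sig : Type} {rk : Sig → ℕ} (c d : Ctxt Sig rk) (s : RTree Sig rk) :
    plug (ctxComp c d) s = plug c (plug d s) := by
  induction c with
  | hole => rfl
  | node σ p sub c ih => simp [ctxComp, plug, ih]

lemma key_step {Sig : Type} {rk : Sig → ℕ} {F : Type}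
    [Field F] {n : ℕ} {ι : Type} (f : RTree Sig rk → F)
    (t : Fin n → RTree Sig rk) (Y : ι → Ctxt Sig rk)
    (μ : ∀ σ' : Sig, Matrix (Fin (rk σ') → Fin n) (Fin n) F)
    (σ : Sig) (τ : Fin (rk σ) → RTree Sig rk)
    (hτ : ∀ (j : Fin (rk σ)) (y : ι),
      f (plug (Y y) (τ j)) = ∑ i, mtaRun μ (τ j) i * f (plug (Y y) (t i)))
    (c : ι)
    (hY : ∀ (j : Fin (rk σ)) (iv : Fin (j : ℕ) → Fin n),
      ∃ y' : ι, Y y' =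
        ctxComp (Y c)
          (Ctxt.node σ j
            (fun l => if h : (l : ℕ) < (j : ℕ) then t (iv ⟨(l : ℕ), h⟩) else τ l)
            Ctxt.hole))
    (j : ℕ) (hj : j ≤ rk σ) :
    f (plug (Y c) (RTree.node σ τ)) =
      ∑ iv : Fin j → Fin n,
        (∏ l : Fin j, mtaRun μ (τ (Fin.castLE hj l)) (iv l)) *
          f (plug (Y c) (RTree.node σ
            (fun l => if h : (l : ℕ) < j then t (iv ⟨(l : ℕ), h⟩) else τ l))) := by
  induction j with
  | zero =>
      simp only [Nat.not_lt_zero, dif_neg, not_false_iff]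
      rw [Fintype.sum_unique]
      simp
  | succ j ih =>
      have hj' : j ≤ rk σ := Nat.le_of_succ_le hj
      have hjlt : j < rk σ := hj
      set jf : Fin (rk σ) := ⟨j, hjlt⟩ with hjf
      rw [ih hj']
      -- per-summand expansion
      have step : ∀ iv : Fin j → Fin n,
          f (plug (Y c) (RTree.node σ
            (fun l => if h : (l : ℕ) < j then t (iv ⟨(l : ℕ), h⟩) else τ l))) =
          ∑ i, mtaRun μ (τ jf) i *
            f (plug (Y c) (RTree.node σ
              (fun l => if h : (l : ℕ) < j + 1 then t ((Fin.snoc iv i : Fin (j+1) → Fin n) ⟨(l : ℕ), h⟩) else τ l))) := by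
        intro iv
        obtain ⟨y', hy'⟩ := hY jf iv
        have hplug : ∀ s : RTree Sig rk,
            plug (Y y') s = plug (Y c) (RTree.node σ (Function.update
              (fun l => if h : (l : ℕ) < j then t (iv ⟨(l : ℕ), h⟩) else τ l) jf s)) := by
          intro s
          rw [hy', plug_ctxComp]
          rfl
        have hupd : ∀ i : Fin n,
            Function.update
              (fun l : Fin (rk σ) => if h : (l : ℕ) < j then t (iv ⟨(l : ℕ), h⟩) else τ l)
              jf (t i) =
            (fun l : Fin (rk σ) => if h : (l : ℕ) < j + 1
              then t ((Fin.snoc iv i : Fin (j+1) → Fin n) ⟨(l : ℕ), h⟩) else τ l) := by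
          intro i
          funext l
          rcases eq_or_ne l jf with h | h
          · subst h
            rw [Function.update_self, dif_pos (Nat.lt_succ_self j)]
            have hsl : ((Fin.snoc iv i : Fin (j+1) → Fin n) ⟨j, Nat.lt_succ_self j⟩) = i := by
              have h2 := Fin.snoc_last (α := fun _ : Fin (j+1) => Fin n) i iv
              simpa [Fin.last] using h2
            rw [hsl]
          · rw [Function.update_of_ne h]
            have hne : (↑l : ℕ) ≠ j := fun hc => h (Fin.ext hc)
            rcases Nat.lt_or_ge (l : ℕ) j with hl | hl
            · rw [dif_pos hl, dif_pos (Nat.lt_succ_of_lt hl)]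
              have hsc : (Fin.snoc iv i : Fin (j+1) → Fin n) ⟨(l : ℕ), Nat.lt_succ_of_lt hl⟩
                  = iv ⟨(l : ℕ), hl⟩ := by
                have h2 := Fin.snoc_castSucc (α := fun _ : Fin (j+1) => Fin n) i iv ⟨(l : ℕ), hl⟩
                simpa [Fin.castSucc, Fin.castAdd, Fin.castLE] using h2
              rw [hsc]
            · rw [dif_neg (Nat.not_lt.mpr hl), dif_neg (by omega)]
        have hfix : Function.update
              (fun l : Fin (rk σ) => if h : (l : ℕ) < j then t (iv ⟨(l : ℕ), h⟩) else τ l)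
              jf (τ jf) =
            (fun l : Fin (rk σ) => if h : (l : ℕ) < j then t (iv ⟨(l : ℕ), h⟩) else τ l) := by
          funext l
          rcases eq_or_ne l jf with h | h
          · subst h
            rw [Function.update_self, dif_neg (Nat.lt_irrefl j)]
          · rw [Function.update_of_ne h]
        have h1 : f (plug (Y c) (RTree.node σ
            (fun l => if h : (l : ℕ) < j then t (iv ⟨(l : ℕ), h⟩) else τ l))) =
            f (plug (Y y') (τ jf)) := by
          rw [hplug, hfix]
        rw [h1, hτ jf y']
        refine Finset.sum_congr rfl fun i _ => ?_
        rw [hplug, hupd]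
      simp_rw [step, Finset.mul_sum]
      rw [← Fintype.sum_prod_type']
      -- reindex via snoc
      have hbij : Function.Bijective
          (fun p : (Fin j → Fin n) × Fin n => (Fin.snoc p.1 p.2 : Fin (j+1) → Fin n)) := by
        constructor
        · intro p q hpq
          have h2 : p.2 = q.2 := by
            have := congrFun hpq (Fin.last j)
            simpa using this
          have h1 : p.1 = q.1 := by
            funext l
            have := congrFun hpq (Fin.castSucc l)
            simpa using this
          exact Prod.ext h1 h2
        · intro g
          exact ⟨(Fin.init g, g (Fin.last j)), Fin.snoc_init_self g⟩
      refine (Fintype.sum_bijective _ hbij _ _ fun p => ?_)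
      obtain ⟨iv, i⟩ := p
      rw [Fin.prod_univ_castSucc]
      have hA : ∀ l : Fin j,
          mtaRun μ (τ (Fin.castLE hj (Fin.castSucc l))) ((Fin.snoc iv i : Fin (j+1) → Fin n) (Fin.castSucc l))
            = mtaRun μ (τ (Fin.castLE hj' l)) (iv l) := by
        intro l
        have h1 : (Fin.castLE hj (Fin.castSucc l)) = Fin.castLE hj' l := by
          apply Fin.ext; simp
        rw [h1, Fin.snoc_castSucc]
      have hB : (Fin.castLE hj (Fin.last j)) = jf := by
        apply Fin.ext; simp [hjf]
      simp_rw [hA, hB, Fin.snoc_last]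
      ring

/-- suppose the Hankel rows `H_{t₁,Y},…,H_{t_n,Y}` are linearly
independent, the hypothesis transition matrices satisfy
`μ(σ')·H_{X,Y} = H_{σ'(X,…,X),Y}` for all symbols `σ'`, the trees `τ₁,…,τ_k`
satisfy `H_{τ_j,Y} = μ(τ_j)·H_{X,Y}`, and `Y` contains the contexts
`c[σ(t_{i₁},…,t_{i_{j−1}},□,τ_{j+1},…,τ_k)]` for all `j ∈ [k]` and
`(i₁,…,i_{j−1}) ∈ [n]^{j−1}` (for a given `c ∈ Y`).  Then
`H_{σ(τ₁,…,τ_k),c} = μ(σ(τ₁,…,τ_k))·H_{X,c}`. -/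
theorem hypothesis_correct_on_new_tree {Sig : Type} {rk : Sig → ℕ} {F : Type}
    [Field F] {n : ℕ} {ι : Type} (f : RTree Sig rk → F)
    (t : Fin n → RTree Sig rk) (Y : ι → Ctxt Sig rk)
    (μ : ∀ σ' : Sig, Matrix (Fin (rk σ') → Fin n) (Fin n) F)
    (hli : LinearIndependent F (fun i : Fin n => fun y : ι => f (plug (Y y) (t i))))
    (hμ : ∀ σ' : Sig,
      μ σ' * Matrix.of (fun i y => f (plug (Y y) (t i))) =
        Matrix.of (fun idx y => f (plug (Y y) (RTree.node σ' (fun l => t (idx l))))))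
    (σ : Sig) (τ : Fin (rk σ) → RTree Sig rk)
    (hτ : ∀ (j : Fin (rk σ)) (y : ι),
      f (plug (Y y) (τ j)) = ∑ i, mtaRun μ (τ j) i * f (plug (Y y) (t i)))
    (c : ι)
    (hY : ∀ (j : Fin (rk σ)) (iv : Fin (j : ℕ) → Fin n),
      ∃ y' : ι, Y y' =
        ctxComp (Y c)
          (Ctxt.node σ j
            (fun l => if h : (l : ℕ) < (j : ℕ) then t (iv ⟨(l : ℕ), h⟩) else τ l)
            Ctxt.hole)) :
    f (plug (Y c) (RTree.node σ τ)) =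
      ∑ i, mtaRun μ (RTree.node σ τ) i * f (plug (Y c) (t i)) := by

  have key := key_step f t Y μ σ τ hτ c hY (rk σ) le_rfl
  have hμ' : ∀ (idx : Fin (rk σ) → Fin n),
      f (plug (Y c) (RTree.node σ (fun l => t (idx l)))) =
        ∑ i, μ σ idx i * f (plug (Y c) (t i)) := by
    intro idx
    have := congrFun (congrFun (hμ σ) idx) c
    simpa [Matrix.mul_apply] using this.symm
  have hfix : ∀ iv : Fin (rk σ) → Fin n,
      (fun l : Fin (rk σ) => if h : (l : ℕ) < rk σ then t (iv ⟨(l : ℕ), h⟩) else τ l) =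
        fun l => t (iv l) := by
    intro iv
    funext l
    rw [dif_pos l.isLt]
  rw [key]
  simp_rw [hfix, hμ', Finset.mul_sum]
  rw [Finset.sum_comm]
  refine Finset.sum_congr rfl fun i _ => ?_
  rw [show mtaRun μ (RTree.node σ τ) i =
      ∑ iv : Fin (rk σ) → Fin n, (∏ l, mtaRun μ (τ l) (iv l)) * μ σ iv i from by
    simp [mtaRun, Matrix.vecMul, dotProduct], Finset.sum_mul]
  refine Finset.sum_congr rfl fun iv _ => ?_
  have : ∀ l : Fin (rk σ), Fin.castLE (le_refl (rk σ)) l = l := fun l => Fin.ext rfl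
  simp_rw [this]
  ring
end
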